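/- If 0 ≤ c < 1/2 and the learning rate is chosen as η = max(1 − 2c, √(8·log N / T)), then the exponentially weighted forecaster with abstention satisfies R_T = ∑_{t=1}^T E[ℓ̂_t] − min_{i∈[N]} ∑_{t=1}^T ℓ_{t,i} ≤ 2·min( (log N)/(1 − 2c), √(T·log N / 2) ). -/

import Mathlib

noncomputable section

/-- Binary loss of expert `i` in round `t`: `1[y_{t,i} ≠ y_t]`. -/
def expertLoss {N : ℕ} (adv : ℕ → Fin N → ℝ) (y : ℕ → ℝ) (t : ℕ) (i : Fin N) : ℝ :=
  if adv t i = y t then 0 else 1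

/-- Normalized exponential weight `q_{t,i}` of expert `i` in round `t`. -/
def ewQ {N : ℕ} (η : ℝ) (adv : ℕ → Fin N → ℝ) (y : ℕ → ℝ) (t : ℕ) (i : Fin N) : ℝ :=
  Real.exp (-η * ∑ k ∈ Finset.range t, expertLoss adv y k i) /
    ∑ j, Real.exp (-η * ∑ k ∈ Finset.range t, expertLoss adv y k j)

/-- Aggregated prediction `p_t = ∑ i, q_{t,i} y_{t,i}`. -/
def aggP {N : ℕ} (η : ℝ) (adv : ℕ → Fin N → ℝ) (y : ℕ → ℝ) (t : ℕ) : ℝ :=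
  ∑ i, ewQ η adv y t i * adv t i

/-- Expected per-round loss of the exponentially weighted forecaster with abstention:
with `p* = max(p_t, 1 - p_t)`, `k* = 1[p_t ≥ 1/2]` and `α_t = 2(1 - p*)`, the expected
loss is `α_t · c_t + (1 - α_t) · 1[k* ≠ y_t]`. -/
def expAlgLoss {N : ℕ} (η : ℝ) (c : ℕ → ℝ) (adv : ℕ → Fin N → ℝ) (y : ℕ → ℝ) (t : ℕ) : ℝ :=
  let p := aggP η adv y t
  let pstar := max p (1 - p)
  let kstar : ℝ := if (1 : ℝ) / 2 ≤ p then 1 else 0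
  let α := 2 * (1 - pstar)
  α * c t + (1 - α) * (if kstar = y t then 0 else 1)

end

/-!
The potential `W_t = ∑ᵢ exp (-η L_{t,i})` of the cumulative expert losses satisfies
`W_{t+1} = W_t (1 - m_t + m_t e^{-η})`, where `m_t` is the `q_t`-weighted loss of the
experts, so `∑_t -log (1 - m_t + m_t e^{-η}) = log N - log W_T ≤ log N + η minᵢ L_{T,i}`.
For binary advice and outcomes the forecaster's expected loss is
`max (2 c m_t, 1 - 2 (1 - c) (1 - m_t))`. It is at most `m_t`, which Hoeffding's lemma bounds
by `-log (1 - m_t + m_t e^{-η}) / η + η / 8`; and when `η ≤ 1 - 2c` it is at most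
`-log (1 - m_t + m_t e^{-η}) / η` itself, because `log (1 + u) ≤ u` bounds this convex function
of `m_t` from below by its two chords through `m = 0` and `m = 1`. So the regret is at most
`log N / η + T η / 8`, and at most `log N / η` when `η ≤ 1 - 2c`; the tuned `η` makes the
applicable bound at most `2 min (log N / (1 - 2c), √(T log N / 2))`.
-/

open Real Finset ProbabilityTheory MeasureTheory

lemma one_sub_add_mul_exp_pos {m : ℝ} (hm0 : 0 ≤ m) (hm1 : m ≤ 1) (x : ℝ) :
    0 < 1 - m + m * exp x := by
  rcases le_total (exp x) 1 with h | h <;> nlinarith [exp_pos x]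

lemma log_one_sub_add_mul_exp_le {m : ℝ} (hm0 : 0 ≤ m) (hm1 : m ≤ 1) (x : ℝ) :
    log (1 - m + m * exp x) ≤ m * x + x ^ 2 / 8 := by
  let μ : Measure ℝ := Ber((1 : ℝ), 0, ⟨m, hm0, hm1⟩)
  have hmgf : mgf (fun ω => id ω - μ[id]) μ x = exp (-(m * x)) * (1 - m + m * exp x) := by
    simp only [mgf, μ, integral_bernoulliMeasure, id, smul_eq_mul]
    rw [mul_add, mul_left_comm, ← exp_add]
    ring_nf
  have hsupp : ∀ᵐ ω ∂μ, id ω ∈ Set.Icc (0 : ℝ) 1 :=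
    ae_iff.2 (bernoulliMeasure_apply_of_notMem_of_notMem _ measurableSet_Icc.compl
      (by simp) (by simp))
  have hhoeffding :=
    (hasSubgaussianMGF_of_mem_Icc measurable_id.aemeasurable hsupp).mgf_le x
  have hpos := one_sub_add_mul_exp_pos hm0 hm1 x
  rw [hmgf] at hhoeffding
  have hlog := log_le_log (by positivity) hhoeffding
  rw [log_mul (exp_pos _).ne' hpos.ne', log_exp, log_exp] at hlog
  norm_num at hlog
  linarith

/-- The expected loss of the abstaining forecaster, for `c ≤ 1 / 2`, in a round where the
experts' weighted loss is `m`. -/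
def abstentionLoss (c m : ℝ) : ℝ := max (2 * c * m) (1 - 2 * (1 - c) * (1 - m))

lemma abstentionLoss_le_self {c m : ℝ} (hc : c ≤ 1 / 2) (hm0 : 0 ≤ m) (hm1 : m ≤ 1) :
    abstentionLoss c m ≤ m :=
  max_le (by nlinarith) (by nlinarith)

lemma mul_abstentionLoss_le_neg_log {c m η : ℝ} (hc : 0 ≤ c) (hη0 : 0 ≤ η)
    (hη : η ≤ 1 - 2 * c) (hm0 : 0 ≤ m) (hm1 : m ≤ 1) :
    η * abstentionLoss c m ≤ -log (1 - m + m * exp (-η)) := by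
  have hη1 : |η| ≤ 1 := by rw [abs_of_nonneg hη0]; linarith
  have hexp_le : exp η - 1 ≤ 2 * (1 - c) * η := by
    have := (abs_le.1 (abs_exp_sub_one_sub_id_le hη1)).2
    nlinarith
  have hexp_neg_le : 2 * c * η ≤ 1 - exp (-η) := by
    have := (abs_le.1 (abs_exp_sub_one_sub_id_le (x := -η) (by rwa [abs_neg]))).2
    nlinarith
  have hpos : 0 < 1 + (1 - m) * (exp η - 1) := by nlinarith [add_one_le_exp η]
  have hsplit : 1 - m + m * exp (-η) = exp (-η) * (1 + (1 - m) * (exp η - 1)) := by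
    have : exp (-η) * exp η = 1 := by rw [← exp_add, neg_add_cancel, exp_zero]
    linear_combination (m - 1) * this
  refine mul_max_of_nonneg _ _ hη0 ▸ max_le ?_ ?_
  · have := log_le_sub_one_of_pos (one_sub_add_mul_exp_pos hm0 hm1 (-η))
    nlinarith [mul_le_mul_of_nonneg_left hexp_neg_le hm0]
  · have := log_le_sub_one_of_pos hpos
    rw [hsplit, log_mul (exp_pos _).ne' hpos.ne', log_exp]
    nlinarith [mul_le_mul_of_nonneg_left hexp_le (sub_nonneg.2 hm1)]

noncomputable section

variable {N : ℕ} (η : ℝ) (adv : ℕ → Fin N → ℝ) (y : ℕ → ℝ)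

def cumLoss (t : ℕ) (i : Fin N) : ℝ := ∑ k ∈ range t, expertLoss adv y k i

def potential (t : ℕ) : ℝ := ∑ j, exp (-η * cumLoss adv y t j)

def mixLoss (t : ℕ) : ℝ := ∑ i, ewQ η adv y t i * expertLoss adv y t i

lemma expertLoss_mem_Icc (t : ℕ) (i : Fin N) : expertLoss adv y t i ∈ Set.Icc (0 : ℝ) 1 := by
  unfold expertLoss; split_ifs <;> norm_num

lemma exp_neg_mul_expertLoss (t : ℕ) (i : Fin N) :
    exp (-η * expertLoss adv y t i) =
      1 - expertLoss adv y t i + expertLoss adv y t i * exp (-η) := by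
  unfold expertLoss; split_ifs <;> simp

lemma potential_pos [Nonempty (Fin N)] (t : ℕ) : 0 < potential η adv y t :=
  sum_pos (fun _ _ => exp_pos _) univ_nonempty

lemma potential_zero : potential η adv y 0 = N := by simp [potential, cumLoss]

lemma ewQ_eq (t : ℕ) (i : Fin N) :
    ewQ η adv y t i = exp (-η * cumLoss adv y t i) / potential η adv y t := rfl

lemma ewQ_nonneg (t : ℕ) (i : Fin N) : 0 ≤ ewQ η adv y t i := by
  rw [ewQ_eq]; exact div_nonneg (exp_pos _).le (sum_nonneg fun _ _ => (exp_pos _).le)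

lemma sum_ewQ [Nonempty (Fin N)] (t : ℕ) : ∑ i, ewQ η adv y t i = 1 := by
  simp only [ewQ_eq, ← sum_div]; exact div_self (potential_pos η adv y t).ne'

lemma mixLoss_mem_Icc [Nonempty (Fin N)] (t : ℕ) :
    mixLoss η adv y t ∈ Set.Icc (0 : ℝ) 1 := by
  refine ⟨sum_nonneg fun i _ =>
    mul_nonneg (ewQ_nonneg η adv y t i) (expertLoss_mem_Icc adv y t i).1, ?_⟩
  calc mixLoss η adv y t ≤ ∑ i, ewQ η adv y t i := sum_le_sum fun i _ =>
        mul_le_of_le_one_right (ewQ_nonneg η adv y t i) (expertLoss_mem_Icc adv y t i).2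
    _ = 1 := sum_ewQ η adv y t

lemma aggP_mem_Icc [Nonempty (Fin N)] (t : ℕ) (hadv : ∀ i, adv t i ∈ Set.Icc (0 : ℝ) 1) :
    aggP η adv y t ∈ Set.Icc (0 : ℝ) 1 := by
  refine ⟨sum_nonneg fun i _ => mul_nonneg (ewQ_nonneg η adv y t i) (hadv i).1, ?_⟩
  calc aggP η adv y t ≤ ∑ i, ewQ η adv y t i :=
        sum_le_sum fun i _ => mul_le_of_le_one_right (ewQ_nonneg η adv y t i) (hadv i).2
    _ = 1 := sum_ewQ η adv y t

lemma potential_succ [Nonempty (Fin N)] (t : ℕ) :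
    potential η adv y (t + 1) =
      potential η adv y t * (1 - mixLoss η adv y t + mixLoss η adv y t * exp (-η)) := by
  have hmix : potential η adv y t * mixLoss η adv y t =
      ∑ j, exp (-η * cumLoss adv y t j) * expertLoss adv y t j := by
    rw [mixLoss, mul_sum]
    refine sum_congr rfl fun j _ => ?_
    rw [ewQ_eq]
    field_simp [(potential_pos η adv y t).ne']
  calc potential η adv y (t + 1)
      = ∑ j, exp (-η * cumLoss adv y t j) *
          (1 - expertLoss adv y t j + expertLoss adv y t j * exp (-η)) := by
        simp only [potential, cumLoss, sum_range_succ, mul_add, exp_add, exp_neg_mul_expertLoss]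
    _ = potential η adv y t -
          (1 - exp (-η)) * ∑ j, exp (-η * cumLoss adv y t j) * expertLoss adv y t j := by
        rw [potential, mul_sum, ← sum_sub_distrib]
        exact sum_congr rfl fun j _ => by ring
    _ = _ := by rw [← hmix]; ring

lemma neg_log_one_sub_mixLoss_eq [Nonempty (Fin N)] (t : ℕ) :
    -log (1 - mixLoss η adv y t + mixLoss η adv y t * exp (-η)) =
      log (potential η adv y t) - log (potential η adv y (t + 1)) := by
  obtain ⟨hm0, hm1⟩ := mixLoss_mem_Icc η adv y t
  rw [potential_succ, log_mul (potential_pos η adv y t).ne'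
    (one_sub_add_mul_exp_pos hm0 hm1 _).ne']
  ring

lemma log_potential_sub_log_potential_le (T : ℕ) (i : Fin N) :
    log (potential η adv y 0) - log (potential η adv y T) ≤ log N + η * cumLoss adv y T i := by
  have : Nonempty (Fin N) := ⟨i⟩
  have hexp : exp (-η * cumLoss adv y T i) ≤ potential η adv y T :=
    single_le_sum (f := fun j => exp (-η * cumLoss adv y T j)) (fun j _ => (exp_pos _).le)
      (mem_univ i)
  have := (le_log_iff_exp_le (potential_pos η adv y T)).2 hexp
  rw [potential_zero]
  linarith

lemma sum_sub_iInf_cumLoss_le [Nonempty (Fin N)] (hη : 0 < η) {loss : ℕ → ℝ} {δ : ℝ}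
    (hround : ∀ t,
      η * loss t ≤ -log (1 - mixLoss η adv y t + mixLoss η adv y t * exp (-η)) + δ)
    (T : ℕ) :
    ∑ t ∈ range T, loss t - ⨅ i, cumLoss adv y T i ≤ (log N + T * δ) / η := by
  have htelescope : η * ∑ t ∈ range T, loss t ≤
      log (potential η adv y 0) - log (potential η adv y T) + T * δ := by
    calc η * ∑ t ∈ range T, loss t
        ≤ ∑ t ∈ range T,
            (log (potential η adv y t) - log (potential η adv y (t + 1)) + δ) := by
          rw [mul_sum]
          exact sum_le_sum fun t _ => neg_log_one_sub_mixLoss_eq η adv y t ▸ hround t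
      _ = _ := by rw [sum_add_distrib, sum_range_sub']; simp
  suffices h : ∀ i, ∑ t ∈ range T, loss t - (log N + T * δ) / η ≤ cumLoss adv y T i by
    linarith [le_ciInf h]
  intro i
  have := log_potential_sub_log_potential_le η adv y T i
  have : ∑ t ∈ range T, loss t - cumLoss adv y T i ≤ (log N + T * δ) / η :=
    (le_div_iff₀ hη).2 (by linarith)
  linarith

lemma mixLoss_eq_abs_sub [Nonempty (Fin N)] (t : ℕ) (hadv : ∀ i, adv t i = 0 ∨ adv t i = 1)
    (hy : y t = 0 ∨ y t = 1) : mixLoss η adv y t = |aggP η adv y t - y t| := by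
  have hp := aggP_mem_Icc η adv y t fun i => by rcases hadv i with h | h <;> simp [h]
  rcases hy with hy | hy
  · have hℓ : ∀ i, expertLoss adv y t i = adv t i := fun i => by
      rcases hadv i with h | h <;> simp [expertLoss, h, hy]
    rw [hy, sub_zero, abs_of_nonneg hp.1, mixLoss, aggP]
    simp only [hℓ]
  · have hℓ : ∀ i, expertLoss adv y t i = 1 - adv t i := fun i => by
      rcases hadv i with h | h <;> simp [expertLoss, h, hy]
    rw [hy, abs_of_nonpos (by linarith [hp.2]), mixLoss, aggP]
    simp only [hℓ, mul_sub, mul_one, sum_sub_distrib, sum_ewQ]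
    ring

lemma expAlgLoss_eq_abstentionLoss [Nonempty (Fin N)] {c : ℕ → ℝ} (t : ℕ)
    (hc : c t ≤ 1 / 2)
    (hadv : ∀ i, adv t i = 0 ∨ adv t i = 1) (hy : y t = 0 ∨ y t = 1) :
    expAlgLoss η c adv y t = abstentionLoss (c t) (mixLoss η adv y t) := by
  have hp := aggP_mem_Icc η adv y t fun i => by rcases hadv i with h | h <;> simp [h]
  rw [mixLoss_eq_abs_sub η adv y t hadv hy]
  simp only [expAlgLoss, abstentionLoss]
  generalize aggP η adv y t = p at hp ⊢
  obtain ⟨hp0, hp1⟩ := hp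
  rcases hy with hy | hy <;> rw [hy] <;> by_cases hhalf : 1 / 2 ≤ p
  · rw [max_eq_left (by linarith), if_pos hhalf, if_neg one_ne_zero, sub_zero,
      abs_of_nonneg hp0, max_eq_right (by nlinarith)]
    ring
  · rw [max_eq_right (by linarith), if_neg hhalf, if_pos rfl, sub_zero, abs_of_nonneg hp0,
      max_eq_left (by nlinarith)]
    ring
  · rw [max_eq_left (by linarith), if_pos hhalf, if_pos rfl, abs_of_nonpos (by linarith),
      max_eq_left (by nlinarith)]
    ring
  · rw [max_eq_right (by linarith), if_neg hhalf, if_neg zero_ne_one,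
      abs_of_nonpos (by linarith), max_eq_right (by nlinarith)]
    ring

end

lemma le_two_mul_min_of_tuned_rate {L T a R : ℝ} (hL : 0 < L) (hT : 0 < T) (ha : 0 < a)
    (hfast : √(8 * L / T) ≤ a → R ≤ L / a)
    (hslow : a ≤ √(8 * L / T) → R ≤ L / √(8 * L / T) + T * (√(8 * L / T) / 8)) :
    R ≤ 2 * min (L / a) √(T * L / 2) := by
  set s := √(8 * L / T)
  set r := √(T * L / 2)
  have hs : 0 < s := sqrt_pos.2 (by positivity)
  have hr : 0 < r := sqrt_pos.2 (by positivity)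
  have hsr : s * r = 2 * L := by
    rw [← sqrt_mul (by positivity),
      show 8 * L / T * (T * L / 2) = (2 * L) ^ 2 by field_simp; ring, sqrt_sq (by positivity)]
  have hLs : L / s = r / 2 := by field_simp; linarith
  have hTs : T * (s / 8) = r / 2 := by
    have hr2 : r ^ 2 = T * L / 2 := sq_sqrt (by positivity)
    field_simp
    nlinarith
  rw [mul_min_of_nonneg _ _ zero_le_two]
  rcases le_total s a with h | h
  · have hLa : L / a ≤ L / s := by gcongr
    have := div_pos hL ha
    exact le_min (by linarith [hfast h]) (by linarith [hfast h])
  · have hLa : L / s ≤ L / a := by gcongr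
    exact le_min (by linarith [hslow h]) (by linarith [hslow h])

/-- Corollary 2: with the tuned learning rate `η = max(1 - 2c, √(8 log N / T))`, the
exponentially weighted forecaster with abstention satisfies
`R_T ≤ 2 · min((log N)/(1 - 2c), √(T log N / 2))`. -/
theorem abstention_tuned_rate (N T : ℕ) (hN : 2 ≤ N) (hT : 1 ≤ T) (c : ℝ)
    (hc0 : 0 ≤ c) (hc : c < 1 / 2)
    (adv : ℕ → Fin N → ℝ) (y : ℕ → ℝ)
    (hadv : ∀ t i, adv t i = 0 ∨ adv t i = 1) (hy : ∀ t, y t = 0 ∨ y t = 1) :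
    (∑ t ∈ Finset.range T,
        expAlgLoss (max (1 - 2 * c) (Real.sqrt (8 * Real.log N / T))) (fun _ => c) adv y t)
        - ⨅ i : Fin N, ∑ t ∈ Finset.range T, expertLoss adv y t i
      ≤ 2 * min (Real.log N / (1 - 2 * c)) (Real.sqrt (T * Real.log N / 2)) := by
  have : Nonempty (Fin N) := ⟨⟨0, by omega⟩⟩
  have hlogN : 0 < log N := log_pos (by exact_mod_cast hN)
  have hT0 : (0 : ℝ) < T := by exact_mod_cast hT
  set η := max (1 - 2 * c) √(8 * log N / T)
  have hη : 0 < η := lt_max_of_lt_left (by linarith)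
  have hm := mixLoss_mem_Icc η adv y
  have hround t : expAlgLoss η (fun _ => c) adv y t = abstentionLoss c (mixLoss η adv y t) :=
    expAlgLoss_eq_abstentionLoss η adv y t hc.le (hadv t) (hy t)
  apply le_two_mul_min_of_tuned_rate hlogN hT0 (by linarith)
  · intro hs
    have hη_eq : η = 1 - 2 * c := max_eq_left hs
    have := sum_sub_iInf_cumLoss_le η adv y hη (loss := expAlgLoss η (fun _ => c) adv y)
      (δ := 0) (fun t => by
        rw [hround, add_zero]
        exact mul_abstentionLoss_le_neg_log hc0 hη.le hη_eq.le (hm t).1 (hm t).2) T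
    exact this.trans_eq (by rw [hη_eq, mul_zero, add_zero])
  · intro hs
    have hη_eq : η = √(8 * log N / T) := max_eq_right hs
    have := sum_sub_iInf_cumLoss_le η adv y hη (loss := expAlgLoss η (fun _ => c) adv y)
      (δ := η ^ 2 / 8) (fun t => by
        have hmix := abstentionLoss_le_self hc.le (hm t).1 (hm t).2
        have hhoeffding := log_one_sub_add_mul_exp_le (hm t).1 (hm t).2 (-η)
        rw [hround]
        nlinarith) T
    exact this.trans_eq (by rw [← hη_eq]; field_simp)
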